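/- arXiv:math/0510296 — 2 statements merged into one kernel-verified Lean document; each statement's English description precedes it below -/
import Mathlib

section
/- Let $A$ be a normal abelian subgroup of a group $G$ and $g \in G$ an element of infinite order. Suppose that for every $a \in A$ there exist a positive integer $k$ and integers $t_1, \dots, t_k \in \{1, -1\}$ such that $[a, g^{t_1}, g^{t_2}, \dots, g^{t_k}] = 1$. Then for every $a \in A$ there exists a positive integer $k$ with $[a,{}_k\, g] = 1$. -/
open scoped commutatorElement

/-- Iterated commutator `[x, y, y, ..., y]` with `y` repeated `k` times (`engel x y 0 = x`). -/
def engel {G : Type*} [Group G] (x y : G) : ℕ → G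
  | 0 => x
  | k + 1 => ⁅engel x y k, y⁆

/-- Left-normed iterated commutator `[x, l₁, l₂, ..., lₙ]`. -/
def lcomm {G : Type*} [Group G] (x : G) (l : List G) : G :=
  l.foldl (fun u v => ⁅u, v⁆) x

/-- `x` is a left Engel element of `G`. -/
def IsLeftEngel (G : Type*) [Group G] (x : G) : Prop :=
  ∀ a : G, ∃ k : ℕ, 0 < k ∧ engel a x k = 1

/-!
On the abelian normal subgroup `A`, put `φ x = g⁻¹ * x⁻¹ * g`. Then `φ` commutes with `x ↦ ⁅x, g⁆`
and `⁅x, g⁻¹⁆ = φ ⁅x, g⁆`. Hence a left-normed commutator of `a` with `k` entries `g^{±1}` equals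
`φ^m (engel a g k)` for some `m`, and since `φ` is injective it is trivial iff `engel a g k` is.
-/

section

variable {G : Type*} [Group G]

theorem engel_succ' (x g : G) : ∀ n, engel x g (n + 1) = engel ⁅x, g⁆ g n
  | 0 => rfl
  | n + 1 => by rw [engel, engel_succ' x g n, engel]

theorem lcomm_cons (x y : G) (l : List G) : lcomm x (y :: l) = lcomm ⁅x, y⁆ l := rfl

namespace Subgroup.Normal

variable {A : Subgroup G} (hA : A.Normal)
include hA

theorem commutatorElement_mem {x : G} (hx : x ∈ A) (g : G) : ⁅x, g⁆ ∈ A := by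
  rw [commutatorElement_def, mul_assoc, mul_assoc, ← mul_assoc g]
  exact mul_mem hx (hA.conj_mem _ (inv_mem hx) g)

theorem engel_mem {x : G} (hx : x ∈ A) (g : G) : ∀ n, engel x g n ∈ A
  | 0 => hx
  | n + 1 => hA.commutatorElement_mem (engel_mem hx g n) g

variable (hab : ∀ u ∈ A, ∀ v ∈ A, u * v = v * u)
include hab

theorem commutatorElement_conj_inv {x : G} (hx : x ∈ A) (g : G) :
    ⁅g⁻¹ * x⁻¹ * g, g⁆ = g⁻¹ * ⁅x, g⁆⁻¹ * g :=
  calc ⁅g⁻¹ * x⁻¹ * g, g⁆ = (g⁻¹ * x⁻¹ * g) * x := by rw [commutatorElement_def]; group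
    _ = x * (g⁻¹ * x⁻¹ * g) := (hab _ hx _ (by simpa using hA.conj_mem _ (inv_mem hx) g⁻¹)).symm
    _ = g⁻¹ * ⁅x, g⁆⁻¹ * g := by rw [commutatorElement_def]; group

theorem engel_conj_inv {x : G} (hx : x ∈ A) (g : G) :
    ∀ n, engel (g⁻¹ * x⁻¹ * g) g n = g⁻¹ * (engel x g n)⁻¹ * g
  | 0 => rfl
  | n + 1 => by
    rw [engel, engel_conj_inv hx g n, engel,
      hA.commutatorElement_conj_inv hab (hA.engel_mem hx g n)]

theorem lcomm_map_zpow_eq_one_iff (g : G) :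
    ∀ (l : List ℤ), (∀ i ∈ l, i = 1 ∨ i = -1) → ∀ x ∈ A,
      (lcomm x (l.map (g ^ ·)) = 1 ↔ engel x g l.length = 1)
  | [], _, _, _ => Iff.rfl
  | i :: l, hl, x, hx => by
    have hl' : ∀ j ∈ l, j = 1 ∨ j = -1 := fun j hj => hl j (List.mem_cons_of_mem _ hj)
    have hxg := hA.commutatorElement_mem hx g
    have hxg' : g⁻¹ * ⁅x, g⁆⁻¹ * g ∈ A := by simpa using hA.conj_mem _ (inv_mem hxg) g⁻¹
    rw [List.map_cons, lcomm_cons, List.length_cons, engel_succ']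
    rcases hl i List.mem_cons_self with rfl | rfl
    · simpa using lcomm_map_zpow_eq_one_iff g l hl' _ hxg
    · rw [zpow_neg_one, commutatorElement_inv_right, ← commutatorElement_inv,
        lcomm_map_zpow_eq_one_iff g l hl' _ hxg',
        hA.engel_conj_inv hab hxg]
      simpa using conj_eq_one_iff (a := g⁻¹) (b := (engel ⁅x, g⁆ g l.length)⁻¹)

end Subgroup.Normal

end

theorem stmt_3_general {G : Type*} [Group G] (A : Subgroup G) (hA : A.Normal)
    (hab : ∀ u ∈ A, ∀ v ∈ A, u * v = v * u)
    (g : G)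
    (h : ∀ a ∈ A, ∃ t : List ℤ, t ≠ [] ∧ (∀ i ∈ t, i = 1 ∨ i = -1) ∧
      lcomm a (t.map (fun i => g ^ i)) = 1) :
    ∀ a ∈ A, ∃ k : ℕ, 0 < k ∧ engel a g k = 1 := by
  intro a ha
  obtain ⟨t, ht, hpm, hlcomm⟩ := h a ha
  exact ⟨t.length, List.length_pos_iff.mpr ht,
    (hA.lcomm_map_zpow_eq_one_iff hab g t hpm a ha).mp hlcomm⟩

theorem stmt_3 {G : Type*} [Group G] (A : Subgroup G) (hA : A.Normal)
    (hab : ∀ u ∈ A, ∀ v ∈ A, u * v = v * u)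
    (g : G) (hg : ¬ IsOfFinOrder g)
    (h : ∀ a ∈ A, ∃ t : List ℤ, t ≠ [] ∧ (∀ i ∈ t, i = 1 ∨ i = -1) ∧
      lcomm a (t.map (fun i => g ^ i)) = 1) :
    ∀ a ∈ A, ∃ k : ℕ, 0 < k ∧ engel a g k = 1 :=
  stmt_3_general A hA hab g h
end

section
/- Let $G$ be a finite $p$-soluble group, $x \in G$ a $p$-element, and $P$ a Sylow $p$-subgroup of $G$. Suppose that for every $y \in G$ with $x^y \in P$, there exists a positive integer $k$ such that $[x^y,{}_k\, x] = 1$ or $[x,{}_k\, x^y] = 1$. Then $x \in P$. -/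
/-!
Induction on `|G|`. A nontrivial `p`-soluble group has a nontrivial normal subgroup `N` which is a
`p`-group or a `p'`-group, and the hypothesis passes to `G ⧸ N`: a conjugate of `x` lying in `P N`
can be moved into `P` by an element of `N`. So by induction `x ∈ P N`, which is `P` when `N` is a
`p`-group. When `N` is a `p'`-group, choose `m ∈ N` with `a = x ^ m ∈ P` and write `x = a c` with
`c ∈ N`. An Engel relation between `x` and `a` conjugates to `[c, a, …, a] = 1`. If `⁅v, a⁆`
commutes with `a` then `⁅v, a⁆ ^ |a| = 1`, and an element of `N` whose order divides a power of `p`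
is trivial; so the chain `[c, a, …, a]` collapses to `⁅c, a⁆ = 1`. Then `c = a⁻¹ x` is a product of
commuting `p`-elements lying in `N`, hence `c = 1` and `x = a ∈ P`.
-/
open scoped commutatorElement

/-- A group is `p`-soluble if it has a subnormal series each of whose factors is a
`p`-group or a `p'`-group. -/
def IsPSolvable (p : ℕ) (G : Type*) [Group G] : Prop :=
  ∃ n : ℕ, ∃ s : Fin (n + 1) → Subgroup G,
    s 0 = ⊥ ∧ s (Fin.last n) = ⊤ ∧
    ∀ i : Fin n, s i.castSucc ≤ s i.succ ∧
      ((s i.castSucc).subgroupOf (s i.succ)).Normal ∧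
      ((∃ m : ℕ, (s i.castSucc).relIndex (s i.succ) = p ^ m) ∨
        ((s i.castSucc).relIndex (s i.succ)).Coprime p)

section Engel

variable {G H : Type*} [Group G] [Group H]

theorem map_engel (f : G →* H) (x y : G) (k : ℕ) : f (engel x y k) = engel (f x) (f y) k := by
  induction k with
  | zero => rfl
  | succ k ih => simp only [engel, map_commutatorElement, ih]

theorem engel_succ_eq_one {x y : G} {k : ℕ} (h : engel x y k = 1) : engel x y (k + 1) = 1 := by
  simp [engel, h]

theorem engel_mem {N : Subgroup G} [N.Normal] {c : G} (hc : c ∈ N) (a : G) (k : ℕ) :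
    engel c a k ∈ N := by
  induction k with
  | zero => exact hc
  | succ k ih =>
    rw [engel, commutatorElement_def, mul_assoc _ a, mul_assoc]
    exact mul_mem ih (Subgroup.Normal.conj_mem inferInstance _ (inv_mem ih) a)

theorem engel_mul_left_self (a c : G) (k : ℕ) :
    engel (a * c) a (k + 1) = a * engel c a (k + 1) * a⁻¹ := by
  induction k with
  | zero => simp only [engel, commutatorElement_def]; group
  | succ k ih =>
    change ⁅engel (a * c) a (k + 1), a⁆ = a * ⁅engel c a (k + 1), a⁆ * a⁻¹
    rw [ih, commutatorElement_def, commutatorElement_def]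
    group

theorem commutatorElement_pow_orderOf_eq_one {v a : G} (h : Commute ⁅v, a⁆ a) :
    ⁅v, a⁆ ^ orderOf a = 1 := by
  -- conjugation by `a` sends `v⁻¹` to `v⁻¹ * ⁅v, a⁆` and fixes `⁅v, a⁆`
  have conj_pow : ∀ i : ℕ, a ^ i * v⁻¹ * (a ^ i)⁻¹ = v⁻¹ * ⁅v, a⁆ ^ i := by
    intro i
    induction i with
    | zero => simp
    | succ i ih =>
      calc a ^ (i + 1) * v⁻¹ * (a ^ (i + 1))⁻¹
          = a * (a ^ i * v⁻¹ * (a ^ i)⁻¹) * a⁻¹ := by group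
        _ = v⁻¹ * ⁅v, a⁆ * (a * ⁅v, a⁆ ^ i * a⁻¹) := by
            rw [ih, commutatorElement_def]; group
        _ = v⁻¹ * ⁅v, a⁆ ^ (i + 1) := by
            rw [← (h.pow_left i).eq, mul_inv_cancel_right, pow_succ', mul_assoc]
  simpa using (conj_pow (orderOf a)).symm

end Engel

section Coprime

variable {G : Type*} [Group G] {p : ℕ} {N : Subgroup G}

theorem eq_one_of_mem_of_orderOf_dvd_prime_pow (hN : (Nat.card N).Coprime p) {z : G}
    (hz : z ∈ N) {m : ℕ} (h : orderOf z ∣ p ^ m) : z = 1 :=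
  orderOf_eq_one_iff.mp <|
    ((Nat.Coprime.coprime_dvd_left (N.orderOf_dvd_natCard hz) hN).pow_right m).eq_one_of_dvd h

theorem commute_of_engel_eq_one [N.Normal] (hN : (Nat.card N).Coprime p) {a c : G} {s : ℕ}
    (ha : orderOf a = p ^ s) (hc : c ∈ N) {k : ℕ} (h : engel c a (k + 1) = 1) :
    Commute c a := by
  induction k with
  | zero => exact commutatorElement_eq_one_iff_commute.mp h
  | succ k ih =>
    apply ih
    have hcomm : Commute ⁅engel c a k, a⁆ a := commutatorElement_eq_one_iff_commute.mp h
    refine eq_one_of_mem_of_orderOf_dvd_prime_pow hN (engel_mem hc a (k + 1)) (m := s) ?_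
    exact ha ▸ orderOf_dvd_of_pow_eq_one (commutatorElement_pow_orderOf_eq_one hcomm)

theorem eq_one_of_commute_of_orderOf_mul (hN : (Nat.card N).Coprime p) {a c : G} {s t : ℕ}
    (ha : orderOf a = p ^ s) (hac : orderOf (a * c) = p ^ t) (hc : c ∈ N) (h : Commute c a) :
    c = 1 := by
  refine eq_one_of_mem_of_orderOf_dvd_prime_pow hN hc (m := s + t) ?_
  have hcomm : Commute a⁻¹ (a * c) := ((Commute.refl a).mul_right h.symm).inv_left
  calc orderOf c = orderOf (a⁻¹ * (a * c)) := by rw [inv_mul_cancel_left]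
    _ ∣ orderOf a⁻¹ * orderOf (a * c) := hcomm.orderOf_mul_dvd_mul_orderOf
    _ = p ^ (s + t) := by rw [orderOf_inv, ha, hac, pow_add]

theorem eq_of_engel_eq_one [N.Normal] (hN : (Nat.card N).Coprime p) {a x : G} {s t : ℕ}
    (ha : orderOf a = p ^ s) (hx : orderOf x = p ^ t) (hax : a⁻¹ * x ∈ N) {k : ℕ}
    (h : engel x a k = 1) : x = a := by
  obtain ⟨c, hc, rfl⟩ : ∃ c ∈ N, a * c = x := ⟨a⁻¹ * x, hax, mul_inv_cancel_left a x⟩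
  have hk : engel c a (k + 1) = 1 := by
    simpa [engel_mul_left_self] using engel_succ_eq_one h
  rw [eq_one_of_commute_of_orderOf_mul hN ha hx hc (commute_of_engel_eq_one hN ha hc hk),
    mul_one]

end Coprime

section Sylow

open scoped Pointwise

variable {G : Type*} [Group G] [Finite G] {p : ℕ} [Fact p.Prime]

theorem Sylow.exists_conj_mem_of_mem_sup (P : Sylow p G) (N : Subgroup G) [N.Normal] {a : G}
    {s : ℕ} (ha : orderOf a = p ^ s) (haPN : a ∈ (P : Subgroup G) ⊔ N) :
    ∃ m ∈ N, m⁻¹ * a * m ∈ (P : Subgroup G) := by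
  set M := (P : Subgroup G) ⊔ N
  let a' : M := ⟨a, haPN⟩
  have hpa : IsPGroup p (Subgroup.zpowers a') :=
    IsPGroup.of_card (n := s) (by rw [Nat.card_zpowers, ← ha]; exact Subgroup.orderOf_mk a haPN)
  obtain ⟨Q, hQ⟩ := hpa.exists_le_sylow
  obtain ⟨g, rfl⟩ := MulAction.exists_smul_eq M (P.subtype le_sup_left) Q
  have hconj : (g : G)⁻¹ * a * g ∈ (P : Subgroup G) := by
    have := hQ (Subgroup.mem_zpowers a')
    rw [Sylow.coe_subgroup_smul, Subgroup.mem_pointwise_smul_iff_inv_smul_mem,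
      Sylow.coe_subtype, Subgroup.mem_subgroupOf] at this
    simpa [MulAut.smul_def, MulAut.conj_apply, mul_assoc] using this
  have hg : (g : G) ∈ N ⊔ (P : Subgroup G) := sup_comm (P : Subgroup G) N ▸ g.2
  obtain ⟨n, hn, q, hq, hnq⟩ := Subgroup.mem_sup_of_normal_left.mp hg
  refine ⟨n, hn, ?_⟩
  have hna : n⁻¹ * a * n = q * ((g : G)⁻¹ * a * g) * q⁻¹ := by rw [← hnq]; group
  rw [hna]
  exact mul_mem (mul_mem hq hconj) (inv_mem hq)

end Sylow

section EngelConjugates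

variable {G H : Type*} [Group G] [Group H]

def EngelRelated (a b : G) : Prop :=
  ∃ k : ℕ, 0 < k ∧ (engel a b k = 1 ∨ engel b a k = 1)

def EngelConjugatesIn (K : Subgroup G) (x : G) : Prop :=
  ∀ y : G, y⁻¹ * x * y ∈ K → EngelRelated (y⁻¹ * x * y) x

theorem orderOf_inv_mul_mul (x y : G) : orderOf (y⁻¹ * x * y) = orderOf x := by
  simpa [MulAut.conj_apply] using MulEquiv.orderOf_eq (MulAut.conj y⁻¹) x

theorem exists_orderOf_map_eq_prime_pow {p : ℕ} (hp : p.Prime) (f : G →* H) {x : G} {s : ℕ}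
    (hx : orderOf x = p ^ s) : ∃ m, orderOf (f x) = p ^ m := by
  obtain ⟨m, -, hm⟩ := (Nat.dvd_prime_pow hp).mp (hx ▸ orderOf_map_dvd f x)
  exact ⟨m, hm⟩

theorem EngelRelated.map (f : G →* H) {a b : G} (h : EngelRelated a b) :
    EngelRelated (f a) (f b) := by
  obtain ⟨k, hk, h | h⟩ := h
  · exact ⟨k, hk, .inl (by rw [← map_engel, h, map_one])⟩
  · exact ⟨k, hk, .inr (by rw [← map_engel, h, map_one])⟩

theorem EngelRelated.eq {p : ℕ} {N : Subgroup G} [N.Normal] (hN : (Nat.card N).Coprime p)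
    {a b : G} {s t : ℕ} (ha : orderOf a = p ^ s) (hb : orderOf b = p ^ t) (hab : a⁻¹ * b ∈ N)
    (h : EngelRelated a b) : a = b := by
  obtain ⟨k, -, h | h⟩ := h
  · exact eq_of_engel_eq_one hN hb ha (by simpa using inv_mem hab) h
  · exact (eq_of_engel_eq_one hN ha hb hab h).symm

variable [Finite G] {p : ℕ} [Fact p.Prime] {P : Sylow p G} {x : G} {s : ℕ}

theorem EngelConjugatesIn.map {f : G →* H} (hf : Function.Surjective f) (hx : orderOf x = p ^ s)
    (h : EngelConjugatesIn P x) : EngelConjugatesIn ((P : Subgroup G).map f) (f x) := by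
  intro y' hy'
  obtain ⟨y, rfl⟩ := hf y'
  have hmem : y⁻¹ * x * y ∈ (P : Subgroup G) ⊔ f.ker := by
    rw [← Subgroup.comap_map_eq, Subgroup.mem_comap]
    simpa using hy'
  obtain ⟨m, hm, hmP⟩ :=
    P.exists_conj_mem_of_mem_sup f.ker ((orderOf_inv_mul_mul x y).trans hx) hmem
  have hym : (y * m)⁻¹ * x * (y * m) = m⁻¹ * (y⁻¹ * x * y) * m := by group
  have hfym : f ((y * m)⁻¹ * x * (y * m)) = (f y)⁻¹ * f x * f y := by
    simp [f.mem_ker.mp hm]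
  rw [← hfym]
  exact (h (y * m) (hym ▸ hmP)).map f

theorem EngelConjugatesIn.mem_of_mem_sup {N : Subgroup G} [N.Normal]
    (hN : (Nat.card N).Coprime p) (hx : orderOf x = p ^ s) (h : EngelConjugatesIn P x)
    (hxPN : x ∈ (P : Subgroup G) ⊔ N) : x ∈ (P : Subgroup G) := by
  obtain ⟨m, hm, hmP⟩ := P.exists_conj_mem_of_mem_sup N hx hxPN
  have hcomm : (m⁻¹ * x * m)⁻¹ * x ∈ N := by
    have hmx : (m⁻¹ * x * m)⁻¹ * x = m⁻¹ * (x⁻¹ * m * x⁻¹⁻¹) := by group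
    rw [hmx]
    exact mul_mem (inv_mem hm) (Subgroup.Normal.conj_mem inferInstance m hm x⁻¹)
  rwa [← (h m hmP).eq hN ((orderOf_inv_mul_mul x m).trans hx) hx hcomm]

end EngelConjugates

def DvdMulClosed (f : ℕ → Prop) : Prop :=
  f 1 ∧ ∀ {a b d : ℕ}, f a → f b → d ∣ a * b → f d

theorem DvdMulClosed.of_dvd {f : ℕ → Prop} (hf : DvdMulClosed f) {d e : ℕ} (hde : d ∣ e)
    (he : f e) : f d :=
  hf.2 he hf.1 (by rwa [mul_one])

theorem dvdMulClosed_prime_pow {p : ℕ} (hp : p.Prime) : DvdMulClosed fun d => ∃ m, d = p ^ m := by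
  refine ⟨⟨0, rfl⟩, ?_⟩
  rintro _ _ d ⟨m, rfl⟩ ⟨n, rfl⟩ hd
  obtain ⟨k, -, rfl⟩ := (Nat.dvd_prime_pow hp).mp (pow_add p m n ▸ hd)
  exact ⟨k, rfl⟩

theorem dvdMulClosed_coprime (p : ℕ) : DvdMulClosed fun d => d.Coprime p :=
  ⟨Nat.coprime_one_left p, fun ha hb hd => Nat.Coprime.coprime_dvd_left hd (ha.mul_left hb)⟩

namespace Subgroup

variable {G H : Type*} [Group G] [Group H] {A B : Subgroup G}

theorem card_sup_dvd_mul (A B : Subgroup G) [B.Normal] :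
    Nat.card (A ⊔ B : Subgroup G) ∣ Nat.card A * Nat.card B := by
  rw [← relIndex_bot_left, ← relIndex_mul_relIndex ⊥ B _ bot_le le_sup_right, relIndex_sup_right,
    relIndex_bot_left, mul_comm]
  exact mul_dvd_mul_right (relIndex_dvd_card B A) _

theorem card_lt_of_ne_top [Finite G] {K : Subgroup G} (hK : K ≠ ⊤) : Nat.card K < Nat.card G :=
  K.card_le_card_group.lt_of_ne (mt K.card_eq_iff_eq_top.mp hK)

theorem card_quotient_lt [Finite G] {N : Subgroup G} [N.Normal] (hN : N ≠ ⊥) :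
    Nat.card (G ⧸ N) < Nat.card G := by
  rw [card_eq_card_quotient_mul_card_subgroup N]
  exact lt_mul_of_one_lt_right Nat.card_pos (one_lt_card_iff_ne_bot N |>.mpr hN)

theorem relIndex_map_map_dvd (f : G →* H) (A B : Subgroup G) :
    (A.map f).relIndex (B.map f) ∣ A.relIndex B := by
  rw [← relIndex_comap]
  exact relIndex_dvd_of_le_left B (le_comap_map f A)

theorem relIndex_dvd_relIndex_of_normal {K : Subgroup G} (hA : (A.subgroupOf B).Normal)
    (hKB : K ≤ B) : A.relIndex K ∣ A.relIndex B := by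
  rw [← relIndex_subgroupOf hKB]
  exact relIndex_dvd_index_of_normal _ _

theorem relIndex_comap_comap_dvd (f : H →* G) (hA : (A.subgroupOf B).Normal) :
    (A.comap f).relIndex (B.comap f) ∣ A.relIndex B := by
  rw [relIndex_comap]
  exact relIndex_dvd_relIndex_of_normal hA (map_comap_le f B)

theorem normal_subgroupOf_map (f : G →* H) (hAB : A ≤ B) (hA : (A.subgroupOf B).Normal) :
    ((A.map f).subgroupOf (B.map f)).Normal :=
  (normal_subgroupOf_iff_le_normalizer (map_mono hAB)).mpr <|
    (map_mono ((normal_subgroupOf_iff_le_normalizer hAB).mp hA)).trans (le_normalizer_map f)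

theorem normal_subgroupOf_comap (f : H →* G) (hAB : A ≤ B) (hA : (A.subgroupOf B).Normal) :
    ((A.comap f).subgroupOf (B.comap f)).Normal :=
  (normal_subgroupOf_iff_le_normalizer (comap_mono hAB)).mpr <|
    (comap_mono ((normal_subgroupOf_iff_le_normalizer hAB).mp hA)).trans (le_normalizer_comap f)

end Subgroup

section NormalRadical

variable {G : Type*} [Group G] {f : ℕ → Prop}

/-- For `f d = ∃ m, d = p ^ m`, resp. `f d = d.Coprime p`, this is `O_p(G)`, resp. `O_p'(G)`. -/
def normalRadical (f : ℕ → Prop) (G : Type*) [Group G] : Subgroup G :=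
  sSup {N : Subgroup G | N.Normal ∧ f (Nat.card N)}

theorem le_normalRadical {N : Subgroup G} (hN : N.Normal) (hfN : f (Nat.card N)) :
    N ≤ normalRadical f G :=
  le_sSup ⟨hN, hfN⟩

instance normalRadical_characteristic : (normalRadical f G).Characteristic := by
  refine Subgroup.characteristic_iff_le_comap.mpr fun φ => sSup_le fun N ⟨hN, hfN⟩ => ?_
  rw [← Subgroup.map_le_iff_le_comap]
  refine le_normalRadical (hN.map _ φ.surjective) ?_
  rwa [Subgroup.card_map_of_injective φ.injective]

theorem DvdMulClosed.card_normalRadical [Finite G] (hf : DvdMulClosed f) :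
    f (Nat.card (normalRadical f G)) := by
  have hsup : SupClosed {N : Subgroup G | N.Normal ∧ f (Nat.card N)} := by
    rintro A ⟨hA, hfA⟩ B ⟨hB, hfB⟩
    exact ⟨Subgroup.sup_normal A B, hf.2 hfA hfB (A.card_sup_dvd_mul B)⟩
  exact (hsup.sSup_mem (Set.toFinite _) ⟨Subgroup.normal_bot, by simpa using hf.1⟩ le_rfl).2

theorem DvdMulClosed.exists_normal_ne_bot_of_normal_subgroup [Finite G] (hf : DvdMulClosed f)
    {M : Subgroup G} [M.Normal] {N : Subgroup M} (hN : N.Normal) (hNbot : N ≠ ⊥)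
    (hfN : f (Nat.card N)) : ∃ K : Subgroup G, K.Normal ∧ K ≠ ⊥ ∧ f (Nat.card K) := by
  refine ⟨(normalRadical f M).map M.subtype, inferInstance, ?_, ?_⟩
  · rw [Ne, Subgroup.map_eq_bot_iff_of_injective _ M.subtype_injective]
    exact fun h => hNbot (le_bot_iff.mp (h ▸ le_normalRadical hN hfN))
  · rw [Subgroup.card_map_of_injective M.subtype_injective]
    exact hf.card_normalRadical

end NormalRadical

theorem prime_pow_or_coprime_of_dvd {p : ℕ} (hp : p.Prime) {d e : ℕ} (hde : d ∣ e)
    (he : (∃ m, e = p ^ m) ∨ e.Coprime p) : (∃ m, d = p ^ m) ∨ d.Coprime p :=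
  he.imp ((dvdMulClosed_prime_pow hp).of_dvd hde) ((dvdMulClosed_coprime p).of_dvd hde)

namespace IsPSolvable

variable {p : ℕ} {G H : Type*} [Group G] [Group H]

theorem exists_normal_ne_top [Nontrivial G] (hG : IsPSolvable p G) :
    ∃ M : Subgroup G, M.Normal ∧ M ≠ ⊤ ∧ ((∃ m, M.index = p ^ m) ∨ M.index.Coprime p) := by
  classical
  obtain ⟨n, s, h0, hl, hs⟩ := hG
  have hex : ∃ i, s i = ⊤ := ⟨_, hl⟩
  have hfind : Fin.find _ hex ≠ 0 := by
    rw [Ne, Fin.find_eq_zero, h0]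
    exact bot_ne_top
  obtain ⟨j, hj⟩ := Fin.exists_succ_eq.mpr hfind
  obtain ⟨-, hA, hfac⟩ := hs j
  have htop : s j.succ = ⊤ := hj ▸ Fin.find_spec hex
  rw [htop, Subgroup.relIndex_top_right] at hfac
  rw [htop, Subgroup.normal_subgroupOf_iff_le_normalizer le_top, top_le_iff,
    Subgroup.normalizer_eq_top_iff] at hA
  exact ⟨_, hA, Fin.find_min hex (hj ▸ Fin.castSucc_lt_succ), hfac⟩

variable [Fact p.Prime]

theorem comap_of_injective (hG : IsPSolvable p G) {f : H →* G} (hf : Function.Injective f) :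
    IsPSolvable p H := by
  obtain ⟨n, s, h0, hl, hs⟩ := hG
  refine ⟨n, fun i => (s i).comap f, ?_, ?_, fun i => ?_⟩
  · change (s 0).comap f = ⊥
    rw [h0, MonoidHom.comap_bot, (MonoidHom.ker_eq_bot_iff f).mpr hf]
  · change (s (Fin.last n)).comap f = ⊤
    rw [hl, Subgroup.comap_top]
  obtain ⟨hle, hA, hfac⟩ := hs i
  exact ⟨Subgroup.comap_mono hle, Subgroup.normal_subgroupOf_comap f hle hA,
    prime_pow_or_coprime_of_dvd Fact.out (Subgroup.relIndex_comap_comap_dvd f hA) hfac⟩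

theorem map_of_surjective (hG : IsPSolvable p G) {f : G →* H} (hf : Function.Surjective f) :
    IsPSolvable p H := by
  obtain ⟨n, s, h0, hl, hs⟩ := hG
  refine ⟨n, fun i => (s i).map f, ?_, ?_, fun i => ?_⟩
  · change (s 0).map f = ⊥
    rw [h0, Subgroup.map_bot]
  · change (s (Fin.last n)).map f = ⊤
    rw [hl, Subgroup.map_top_of_surjective f hf]
  obtain ⟨hle, hA, hfac⟩ := hs i
  exact ⟨Subgroup.map_mono hle, Subgroup.normal_subgroupOf_map f hle hA,
    prime_pow_or_coprime_of_dvd Fact.out (Subgroup.relIndex_map_map_dvd f _ _) hfac⟩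

theorem exists_normal_ne_bot [Finite G] [Nontrivial G] (hG : IsPSolvable p G) :
    ∃ N : Subgroup G, N.Normal ∧ N ≠ ⊥ ∧ ((∃ m, Nat.card N = p ^ m) ∨ (Nat.card N).Coprime p) := by
  induction hn : Nat.card G using Nat.strong_induction_on generalizing G with
  | _ n ih =>
  subst hn
  obtain ⟨M, hM, hMtop, hMfac⟩ := hG.exists_normal_ne_top
  by_cases hMbot : M = ⊥
  · refine ⟨⊤, inferInstance, top_ne_bot, ?_⟩
    rwa [Subgroup.card_top, ← Subgroup.index_bot, ← hMbot]
  have : Nontrivial M := (Subgroup.nontrivial_iff_ne_bot M).mpr hMbot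
  obtain ⟨N, hN, hNbot, hNp | hNp'⟩ :=
    ih _ (Subgroup.card_lt_of_ne_top hMtop) (hG.comap_of_injective M.subtype_injective) rfl
  · obtain ⟨K, hK, hKbot, hKp⟩ :=
      (dvdMulClosed_prime_pow Fact.out).exists_normal_ne_bot_of_normal_subgroup hN hNbot hNp
    exact ⟨K, hK, hKbot, .inl hKp⟩
  · obtain ⟨K, hK, hKbot, hKp'⟩ :=
      (dvdMulClosed_coprime p).exists_normal_ne_bot_of_normal_subgroup hN hNbot hNp'
    exact ⟨K, hK, hKbot, .inr hKp'⟩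

end IsPSolvable

theorem stmt_8 {G : Type*} [Group G] [Finite G] (p : ℕ) [Fact p.Prime]
    (hG : IsPSolvable p G) (x : G) (hx : ∃ m : ℕ, orderOf x = p ^ m)
    (P : Sylow p G)
    (h : ∀ y : G, y⁻¹ * x * y ∈ (P : Subgroup G) →
      ∃ k : ℕ, 0 < k ∧ (engel (y⁻¹ * x * y) x k = 1 ∨ engel x (y⁻¹ * x * y) k = 1)) :
    x ∈ (P : Subgroup G) := by
  induction hn : Nat.card G using Nat.strong_induction_on generalizing G with
  | _ n ih =>
  subst hn
  obtain ⟨s, hs⟩ := hx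
  rcases subsingleton_or_nontrivial G with _ | _
  · exact Subsingleton.elim x 1 ▸ one_mem _
  obtain ⟨N, hN, hNbot, hNtype⟩ := hG.exists_normal_ne_bot
  have hπ := QuotientGroup.mk'_surjective N
  have hxPN : x ∈ (P : Subgroup G) ⊔ N := by
    have := ih _ (Subgroup.card_quotient_lt hNbot) (hG.map_of_surjective hπ) _
      (exists_orderOf_map_eq_prime_pow Fact.out _ hs) (P.mapSurjective hπ)
      (EngelConjugatesIn.map hπ hs h) rfl
    rwa [Sylow.coe_mapSurjective, ← Subgroup.mem_comap, Subgroup.comap_map_eq,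
      QuotientGroup.ker_mk'] at this
  rcases hNtype with ⟨m, hm⟩ | hNp'
  · rwa [sup_eq_left.mpr ((IsPGroup.of_card hm).le_sylow_of_normal P)] at hxPN
  · exact EngelConjugatesIn.mem_of_mem_sup hNp' hs h hxPN
end
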